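/- arXiv:1401.4400 — 7 statements merged into one kernel-verified Lean document; each statement's English description precedes it below -/
import Mathlib

section
/- There is no function u : ℝ → ℝ of class C⁴ such that u(x) > 0 for all x and u''''(x) = -u(x)^{-p} for all x ∈ ℝ, where p > 0 is a fixed real number. -/
/-!
Since `u'''' < 0`, the function `u'''` is strictly decreasing, so after replacing `u` by
`x ↦ u (-x)` if necessary it is eventually bounded above by a negative constant. Integrating
three times, `u''`, `u'` and then `u` tend to `-∞`, which contradicts `u > 0`.
-/

open Filter

lemma tendsto_atBot_of_eventually_deriv_le {f : ℝ → ℝ} {c : ℝ} (hf : Differentiable ℝ f)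
    (hc : c < 0) (h : ∀ᶠ x in atTop, deriv f x ≤ c) : Tendsto f atTop atBot := by
  obtain ⟨a, ha⟩ := eventually_atTop.1 h
  have linear_bound : ∀ x ≥ a, f x ≤ f a + c * (x - a) := fun x hx => by
    have := (convex_Ici a).image_sub_le_mul_sub_of_deriv_le hf.continuous.continuousOn
      hf.differentiableOn (fun y hy => ha y (interior_subset hy)) a Set.self_mem_Ici x hx hx
    linarith
  refine tendsto_atBot_mono' atTop (eventually_atTop.2 ⟨a, linear_bound⟩) ?_
  exact tendsto_atBot_add_const_left _ _
    ((tendsto_atTop_add_const_right _ (-a) tendsto_id).const_mul_atTop_of_neg hc)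

lemma tendsto_atBot_of_tendsto_deriv_atBot {f : ℝ → ℝ} (hf : Differentiable ℝ f)
    (h : Tendsto (deriv f) atTop atBot) : Tendsto f atTop atBot :=
  tendsto_atBot_of_eventually_deriv_le hf neg_one_lt_zero (h.eventually_le_atBot (-1))

lemma tendsto_atBot_of_tendsto_iteratedDeriv_atBot {n : ℕ} {f : ℝ → ℝ} (hf : ContDiff ℝ n f)
    (h : Tendsto (iteratedDeriv n f) atTop atBot) : Tendsto f atTop atBot := by
  induction n generalizing f with
  | zero => simpa using h
  | succ n ih =>
    obtain ⟨hdiff, -, hderiv⟩ := (contDiff_succ_iff_deriv (n := n)).1 (by exact_mod_cast hf)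
    rw [iteratedDeriv_succ'] at h
    exact tendsto_atBot_of_tendsto_deriv_atBot hdiff (ih hderiv h)

lemma tendsto_atBot_of_iteratedDeriv_neg {n : ℕ} {f : ℝ → ℝ} (hf : ContDiff ℝ (n + 2) f)
    (hneg : ∀ x, iteratedDeriv (n + 2) f x < 0) (h₀ : iteratedDeriv (n + 1) f 0 ≤ 0) :
    Tendsto f atTop atBot := by
  have hanti : StrictAnti (iteratedDeriv (n + 1) f) :=
    strictAnti_of_deriv_neg fun x => iteratedDeriv_succ (n := n + 1) (f := f) ▸ hneg x
  have hle : ∀ᶠ x in atTop, deriv (iteratedDeriv n f) x ≤ iteratedDeriv (n + 1) f 1 :=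
    eventually_atTop.2 ⟨1, fun x hx => iteratedDeriv_succ (n := n) (f := f) ▸ hanti.antitone hx⟩
  refine tendsto_atBot_of_tendsto_iteratedDeriv_atBot (n := n) (hf.of_le (by norm_cast; omega)) ?_
  exact tendsto_atBot_of_eventually_deriv_le
    (hf.differentiable_iteratedDeriv n (by norm_cast; omega))
    ((hanti zero_lt_one).trans_le h₀) hle

theorem stmt0_general (p : ℝ) :
    ¬ ∃ u : ℝ → ℝ, ContDiff ℝ 4 u ∧ (∀ x, 0 < u x) ∧
      ∀ x, iteratedDeriv 4 u x = -(u x) ^ (-p) := by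
  rintro ⟨u, hu, hpos, heq⟩
  have hneg : ∀ x, iteratedDeriv 4 u x < 0 := fun x => by
    rw [heq x]
    exact neg_neg_of_pos (Real.rpow_pos_of_pos (hpos x) _)
  have not_tendsto : ∀ v : ℝ → ℝ, (∀ x, 0 < v x) → ¬ Tendsto v atTop atBot := fun v hv h => by
    obtain ⟨x, hx⟩ := (h.eventually_le_atBot 0).exists
    exact (hv x).not_ge hx
  rcases le_or_gt (iteratedDeriv 3 u 0) 0 with h₀ | h₀
  · exact not_tendsto u hpos (tendsto_atBot_of_iteratedDeriv_neg hu hneg h₀)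
  · refine not_tendsto (fun x => u (-x)) (fun x => hpos (-x))
      (tendsto_atBot_of_iteratedDeriv_neg (n := 2) (hu.comp contDiff_neg) (fun x => ?_) ?_)
    · norm_num [iteratedDeriv_comp_neg, hneg (-x)]
    · norm_num [iteratedDeriv_comp_neg, h₀.le]

theorem stmt0 (p : ℝ) (hp : 0 < p) :
    ¬ ∃ u : ℝ → ℝ, ContDiff ℝ 4 u ∧ (∀ x, 0 < u x) ∧
      ∀ x, iteratedDeriv 4 u x = -(u x) ^ (-p) :=
  stmt0_general p
end

section
/- There is no function w : [0, ∞) → ℝ of class C⁴ such that w(t) → ∞ as t → ∞ and w''''(t) ≥ w(t)² for all t ≥ 0. -/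
/-!
Since `w → ∞` and `w⁽ⁿ⁾ ≥ w²`, all of `w, w', …, w⁽ⁿ⁻¹⁾` tend to `∞`, so at some `T` they all
exceed `1`. The function `v(t) = C / (c - t)ⁿ` with `C = n (n+1) ⋯ (2n-1)` solves `v⁽ⁿ⁾ = v²` and
blows up at `c`; for `c` large its first `n` derivatives at `T` are below `1`. Comparing the chains
`w⁽ᵏ⁾ - v⁽ᵏ⁾` gives `w > v` on `[T, c)`, so `w → ∞` as `t → c⁻`, contradicting continuity of `w`.
-/

open Filter Set Topology

theorem monotoneOn_Icc_of_hasDerivAt_chain {d : ℕ → ℝ → ℝ} {x y : ℝ} (n : ℕ)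
    (hd : ∀ i < n, ∀ t ∈ Icc x y, HasDerivAt (d i) (d (i + 1) t) t)
    (htop : ∀ t ∈ Ioo x y, 0 ≤ d n t) (hx : ∀ i, 0 < i → i < n → 0 ≤ d i x) :
    ∀ i < n, MonotoneOn (d i) (Icc x y) := by
  induction n generalizing d with
  | zero => simp
  | succ n ih =>
    have hmono : ∀ i < n, MonotoneOn (d (i + 1)) (Icc x y) :=
      ih (fun i hi t ht => hd (i + 1) (by omega) t ht) htop
        (fun i _ hi => hx (i + 1) (by omega) (by omega))
    have hd1_nonneg : ∀ t ∈ Ioo x y, 0 ≤ d 1 t := by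
      intro t ht
      rcases Nat.eq_zero_or_pos n with rfl | hn
      · exact htop t ht
      · exact (hx 1 one_pos (by omega)).trans
          (hmono 0 hn (left_mem_Icc.2 (ht.1.le.trans ht.2.le)) (Ioo_subset_Icc_self ht) ht.1.le)
    rintro (_ | i) hi
    · rw [← interior_Icc] at hd1_nonneg
      exact monotoneOn_of_hasDerivWithinAt_nonneg (convex_Icc x y)
        (fun t ht => (hd 0 hi t ht).continuousAt.continuousWithinAt)
        (fun t ht => (hd 0 hi t (interior_subset ht)).hasDerivWithinAt) hd1_nonneg
    · exact hmono i (by omega)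

theorem pos_of_hasDerivAt_chain {d : ℕ → ℝ → ℝ} {a b : ℝ} {n : ℕ} (hn : n ≠ 0)
    (hd : ∀ i < n, ∀ t ∈ Ico a b, HasDerivAt (d i) (d (i + 1) t) t)
    (ha : ∀ i < n, 0 < d i a) (htop : ∀ t ∈ Ico a b, 0 < d 0 t → 0 ≤ d n t) :
    ∀ t ∈ Ico a b, 0 < d 0 t := by
  have hn0 : 0 < n := Nat.pos_of_ne_zero hn
  intro t₀ ht₀
  by_contra! hbad
  -- At the first zero `s` of `d 0` the whole chain is monotone on `[a, s]`, so `d 0 s ≥ d 0 a > 0`.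
  have hcont : ContinuousOn (d 0) (Icc a t₀) := fun t ht =>
    (hd 0 hn0 t ⟨ht.1, ht.2.trans_lt ht₀.2⟩).continuousAt.continuousWithinAt
  obtain ⟨s, ⟨hs, hs0⟩, hleast⟩ : ∃ s, IsLeast (Icc a t₀ ∩ d 0 ⁻¹' Iic 0) s :=
    (isCompact_Icc.of_isClosed_subset (hcont.preimage_isClosed_of_isClosed isClosed_Icc
      isClosed_Iic) inter_subset_left).exists_isLeast ⟨t₀, ⟨ht₀.1, le_rfl⟩, hbad⟩
  have hsb : s < b := hs.2.trans_lt ht₀.2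
  have hmono := monotoneOn_Icc_of_hasDerivAt_chain (x := a) (y := s) n
    (fun i hi t ht => hd i hi t ⟨ht.1, ht.2.trans_lt hsb⟩)
    (fun t ht => htop t ⟨ht.1.le, ht.2.trans hsb⟩ <| by
      by_contra! h
      exact (hleast ⟨⟨ht.1.le, ht.2.le.trans hs.2⟩, h⟩).not_gt ht.2)
    (fun i _ hi => (ha i hi).le)
  exact (ha 0 hn0).not_ge ((hmono 0 hn0 (left_mem_Icc.2 hs.1) ⟨hs.1, le_rfl⟩ hs.1).trans hs0)

theorem tendsto_atTop_of_tendsto_deriv_atTop {f : ℝ → ℝ} (hf : Differentiable ℝ f)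
    (hf' : Tendsto (deriv f) atTop atTop) : Tendsto f atTop atTop := by
  obtain ⟨a, ha⟩ := eventually_atTop.1 (hf'.eventually_ge_atTop 1)
  have hgrowth : ∀ x ≥ a, 1 * (x - a) ≤ f x - f a := fun x hx =>
    (convex_Ici a).mul_sub_le_image_sub_of_le_deriv hf.continuous.continuousOn
      hf.differentiableOn (fun t ht => ha t (interior_subset ht)) a self_mem_Ici x hx hx
  refine tendsto_atTop_mono' _ ?_ (tendsto_atTop_add_const_right _ (f a - a) tendsto_id)
  filter_upwards [eventually_ge_atTop a] with x hx
  linarith [hgrowth x hx, id_eq x]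

/-- The `k`-th derivative of `v(t) = C / (c - t) ^ n`, `C = n.ascFactorial n = n (n+1) ⋯ (2n-1)`,
the solution of `v⁽ⁿ⁾ = v²` that blows up at `c`. -/
noncomputable def blowUpProfile (n : ℕ) (c : ℝ) (k : ℕ) (t : ℝ) : ℝ :=
  n.ascFactorial n * n.ascFactorial k / (c - t) ^ (n + k)

namespace blowUpProfile

variable {n : ℕ} {c t : ℝ}

theorem eq_mul_zpow (k : ℕ) (t : ℝ) :
    blowUpProfile n c k t = n.ascFactorial n * n.ascFactorial k * (c - t) ^ (-(n + k : ℤ)) := by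
  rw [blowUpProfile, zpow_neg, ← Nat.cast_add, zpow_natCast, div_eq_mul_inv]

theorem hasDerivAt (k : ℕ) (ht : t ≠ c) :
    HasDerivAt (blowUpProfile n c k) (blowUpProfile n c (k + 1) t) t := by
  have hpow := (hasDerivAt_zpow (-(n + k : ℤ)) (c - t) (.inl (sub_ne_zero.2 ht.symm))).comp t
    ((hasDerivAt_id t).const_sub c)
  rw [funext (eq_mul_zpow k), eq_mul_zpow, Nat.ascFactorial_succ]
  refine (hpow.const_mul _).congr_deriv ?_
  rw [show -((n : ℤ) + (k + 1 : ℕ)) = -(n + k) - 1 by push_cast; ring]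
  push_cast
  ring

theorem sq_zero : blowUpProfile n c 0 t ^ 2 = blowUpProfile n c n t := by
  simp only [blowUpProfile, Nat.ascFactorial_zero]
  ring

theorem nonneg (k : ℕ) (ht : t < c) : 0 ≤ blowUpProfile n c k t := by
  have : 0 < c - t := sub_pos.2 ht
  unfold blowUpProfile
  positivity

theorem tendsto_nhdsLT (hn : n ≠ 0) : Tendsto (blowUpProfile n c 0) (𝓝[<] c) atTop := by
  have hC : (0 : ℝ) < n.ascFactorial n := by
    obtain ⟨m, rfl⟩ := Nat.exists_eq_succ_of_ne_zero hn
    exact_mod_cast Nat.ascFactorial_pos m _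
  have hpow : Tendsto (fun t => (c - t) ^ n) (𝓝[<] c) (𝓝[>] 0) := by
    refine tendsto_nhdsWithin_iff.2 ⟨?_, eventually_nhdsWithin_of_forall fun t ht =>
      mem_Ioi.2 (pow_pos (sub_pos.2 ht) n)⟩
    have : Continuous fun t : ℝ => (c - t) ^ n := by fun_prop
    simpa [zero_pow hn] using (this.tendsto c).mono_left nhdsWithin_le_nhds
  refine (hpow.inv_tendsto_nhdsGT_zero.const_mul_atTop hC).congr fun t => ?_
  simp [blowUpProfile, div_eq_mul_inv]

theorem tendsto_atTop (k : ℕ) (hnk : n + k ≠ 0) (t : ℝ) :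
    Tendsto (fun c => blowUpProfile n c k t) atTop (𝓝 0) :=
  tendsto_const_nhds.div_atTop <| (tendsto_pow_atTop hnk).comp <|
    tendsto_atTop_add_const_right _ (-t) tendsto_id

end blowUpProfile

theorem tendsto_iteratedDeriv_atTop {n : ℕ} {w : ℝ → ℝ} (hw : ContDiff ℝ n w)
    (h : Tendsto (iteratedDeriv n w) atTop atTop) :
    ∀ k ≤ n, Tendsto (iteratedDeriv k w) atTop atTop := by
  intro k hk
  refine Nat.decreasingInduction (motive := fun k _ => Tendsto (iteratedDeriv k w) atTop atTop)
    (fun k hk ih => ?_) h hk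
  rw [iteratedDeriv_succ] at ih
  exact tendsto_atTop_of_tendsto_deriv_atTop
    (hw.differentiable_iteratedDeriv k (by exact_mod_cast hk)) ih

theorem blowUpProfile_lt_of_sq_le_iteratedDeriv {n : ℕ} (hn : n ≠ 0) {w : ℝ → ℝ}
    (hw : ContDiff ℝ n w) {T c : ℝ} (hT : ∀ k < n, blowUpProfile n c k T < iteratedDeriv k w T)
    (h : ∀ t ∈ Ico T c, w t ^ 2 ≤ iteratedDeriv n w t) :
    ∀ t ∈ Ico T c, blowUpProfile n c 0 t < w t := by
  have hpos := pos_of_hasDerivAt_chain (d := fun k t => iteratedDeriv k w t - blowUpProfile n c k t)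
    (b := c) hn (fun k hk t ht => ?_) (fun k hk => sub_pos.2 (hT k hk)) (fun t ht hwt => ?_)
  · simpa using hpos
  · have hdiff := hw.differentiable_iteratedDeriv k (by exact_mod_cast hk)
    rw [iteratedDeriv_succ]
    exact (hdiff t).hasDerivAt.sub (blowUpProfile.hasDerivAt k ht.2.ne)
  · simp only [iteratedDeriv_zero, sub_pos] at hwt
    rw [sub_nonneg, ← blowUpProfile.sq_zero]
    exact (pow_le_pow_left₀ (blowUpProfile.nonneg 0 ht.2) hwt.le 2).trans (h t ht)

theorem not_tendsto_atTop_of_sq_le_iteratedDeriv {n : ℕ} (hn : n ≠ 0) {w : ℝ → ℝ}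
    (hw : ContDiff ℝ n w) (h : ∀ t ≥ 0, w t ^ 2 ≤ iteratedDeriv n w t) :
    ¬ Tendsto w atTop atTop := by
  intro hlim
  have hderiv : ∀ k ≤ n, Tendsto (iteratedDeriv k w) atTop atTop :=
    tendsto_iteratedDeriv_atTop hw <| tendsto_atTop_mono' _ ((eventually_ge_atTop 0).mono h)
      ((tendsto_pow_atTop two_ne_zero).comp hlim)
  obtain ⟨T, hT0, hT⟩ : ∃ T, 0 ≤ T ∧ ∀ k ∈ Iio n, 1 ≤ iteratedDeriv k w T :=
    ((eventually_ge_atTop 0).and <| (eventually_all_finite (finite_Iio n)).2 fun k hk =>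
      (hderiv k (le_of_lt hk)).eventually_ge_atTop 1).exists
  obtain ⟨c, hTc, hc⟩ : ∃ c, T < c ∧ ∀ k ∈ Iio n, blowUpProfile n c k T < 1 :=
    ((eventually_gt_atTop T).and <| (eventually_all_finite (finite_Iio n)).2 fun k _ =>
      (tendsto_order.1 (blowUpProfile.tendsto_atTop k (by omega) T)).2 1 one_pos).exists
  have hlower := blowUpProfile_lt_of_sq_le_iteratedDeriv hn hw
    (fun k hk => (hc k hk).trans_le (hT k hk)) (fun t ht => h t (hT0.trans ht.1))
  have hblowup : Tendsto w (𝓝[<] c) atTop :=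
    tendsto_atTop_mono' _ (mem_of_superset (Ico_mem_nhdsLT hTc) fun t ht => (hlower t ht).le)
      (blowUpProfile.tendsto_nhdsLT hn)
  exact not_tendsto_atTop_of_tendsto_nhds
    ((hw.continuous.tendsto c).mono_left nhdsWithin_le_nhds) hblowup

theorem stmt3 :
    ¬ ∃ w : ℝ → ℝ, ContDiff ℝ 4 w ∧
      Filter.Tendsto w Filter.atTop Filter.atTop ∧
      ∀ t ≥ (0 : ℝ), (w t) ^ 2 ≤ iteratedDeriv 4 w t := by
  rintro ⟨w, hw, hlim, h⟩
  exact not_tendsto_atTop_of_sq_le_iteratedDeriv four_ne_zero hw h hlim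
end

section
/- There is no pair of C² functions U, W : [0,∞) → ℝ and integer N ≥ 3 such that: W > 0 everywhere, W is nonincreasing, W(r) → α for some α > 0, U > 0, U'(0) = 0, U''(r) + (N-1)U'(r)/r = W(r) for r > 0, and W''(r) + (N-1)W'(r)/r = -1/U(r) for r > 0. -/
/-!
Write `Δ` for the radial Laplacian in dimension `N`, so that `(r^(N-1) f')' = r^(N-1) Δf`.
Since `W` is nonincreasing, `ΔU = W ≤ W 0`, and integrating this twice shows that `U` grows at
most quadratically. Then `ΔW = -1/U ≤ -c/r²` for `r ≥ 1`; integrated once this gives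
(for `N ≥ 3`) `W'(r) ≤ -c'/r` for large `r`, so `W` decreases at least like `-c' log r` and
eventually becomes negative.
-/

open Set Filter

/-- The Laplacian of `x ↦ f ‖x‖` on `ℝᴺ`, in the radial variable `r > 0`. -/
noncomputable def radialLaplacian (N : ℕ) (f : ℝ → ℝ) (r : ℝ) : ℝ :=
  deriv (deriv f) r + (N - 1) * deriv f r / r

lemma le_of_hasDerivAt_le {a : ℝ} {f g f' g' : ℝ → ℝ}
    (hf : ContinuousOn f (Ici a)) (hg : ContinuousOn g (Ici a))
    (hf' : ∀ x > a, HasDerivAt f (f' x) x) (hg' : ∀ x > a, HasDerivAt g (g' x) x)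
    (hle : ∀ x > a, f' x ≤ g' x) (ha : f a ≤ g a) {x : ℝ} (hx : a ≤ x) : f x ≤ g x := by
  have hmono : MonotoneOn (fun y => g y - f y) (Ici a) := by
    refine monotoneOn_of_hasDerivWithinAt_nonneg (convex_Ici a) (hg.sub hf)
      (f' := fun y => g' y - f' y) (fun y hy => ?_) (fun y hy => ?_) <;> rw [interior_Ici] at hy
    · exact ((hg' y hy).sub (hf' y hy)).hasDerivWithinAt
    · exact sub_nonneg.2 (hle y hy)
  linarith [hmono self_mem_Ici hx hx]

lemma tendsto_atBot_of_deriv_le_neg_div {f : ℝ → ℝ} {a c : ℝ} (ha : 0 < a) (hc : 0 < c)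
    (hf : Differentiable ℝ f) (hf' : ∀ r > a, deriv f r ≤ -c / r) :
    Tendsto f atTop atBot := by
  have hlog : ∀ r ≥ a, f r ≤ f a + c * Real.log a - c * Real.log r := by
    intro r hr
    refine le_of_hasDerivAt_le (g := fun x => f a + c * Real.log a - c * Real.log x)
      (g' := fun x => -c / x) hf.continuous.continuousOn ?_ (fun x _ => (hf x).hasDerivAt)
      (fun x hx => ?_) hf' (by simp) hr
    · exact continuousOn_const.sub (continuousOn_const.mul
        (Real.continuousOn_log.mono fun x hx => (ha.trans_le hx).ne'))
    · exact (((Real.hasDerivAt_log (ha.trans hx).ne').const_mul c).const_sub _).congr_deriv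
        (by ring)
  refine tendsto_atBot_mono' atTop ((eventually_ge_atTop a).mono hlog) ?_
  exact tendsto_atBot_add_const_left _ _
    (tendsto_neg_atTop_atBot.comp (Real.tendsto_log_atTop.const_mul_atTop hc))

lemma hasDerivAt_pow_mul_deriv {N : ℕ} (hN : 1 ≤ N) {f : ℝ → ℝ} {r : ℝ} (hr : r ≠ 0)
    (hf : DifferentiableAt ℝ (deriv f) r) :
    HasDerivAt (fun x => x ^ (N - 1) * deriv f x) (r ^ (N - 1) * radialLaplacian N f r) r := by
  obtain ⟨m, rfl⟩ : ∃ m, N = m + 1 := ⟨N - 1, by omega⟩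
  refine ((hasDerivAt_pow m r).mul hf.hasDerivAt).congr_deriv ?_
  rcases m with _ | m
  · simp [radialLaplacian]
  · simp only [radialLaplacian, Nat.add_sub_cancel]
    push_cast
    field_simp
    ring

lemma le_add_mul_sq_of_radialLaplacian_le {N : ℕ} (hN : 2 ≤ N) {f : ℝ → ℝ}
    (hf : ContDiff ℝ 2 f) {M : ℝ} (hM : ∀ r > 0, radialLaplacian N f r ≤ M) {r : ℝ}
    (hr : 0 ≤ r) :
    f r ≤ f 0 + M / (2 * N) * r ^ 2 := by
  have hN0 : (N : ℝ) ≠ 0 := by positivity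
  have hflux : ∀ r ≥ 0, r ^ (N - 1) * deriv f r ≤ M / N * r ^ N := by
    intro r hr
    refine le_of_hasDerivAt_le (g := fun x => M / N * x ^ N) (g' := fun x => x ^ (N - 1) * M)
      ((continuous_pow _).mul (hf.continuous_deriv one_le_two)).continuousOn (by fun_prop)
      (fun x hx => hasDerivAt_pow_mul_deriv (by omega) hx.ne' (hf.differentiable_deriv_two x))
      (fun x _ => ?_) (fun x hx => mul_le_mul_of_nonneg_left (hM x hx) (by positivity))
      (by simp [zero_pow (by omega : N - 1 ≠ 0), zero_pow (by omega : N ≠ 0)]) hr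
    refine ((hasDerivAt_pow N x).const_mul _).congr_deriv ?_
    field_simp
  have hslope : ∀ r > 0, deriv f r ≤ M / N * r := by
    intro r hr
    have hpow : r ^ N = r ^ (N - 1) * r := by rw [← pow_succ, Nat.sub_add_cancel (by omega)]
    have := hflux r hr.le
    rw [hpow] at this
    nlinarith [pow_pos hr (N - 1)]
  refine le_of_hasDerivAt_le (g := fun x => f 0 + M / (2 * N) * x ^ 2) (g' := fun x => M / N * x)
    hf.continuous.continuousOn (by fun_prop)
    (fun x _ => (hf.differentiable two_ne_zero x).hasDerivAt) (fun x _ => ?_) hslope (by simp) hr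
  refine (((hasDerivAt_pow 2 x).const_mul _).const_add _).congr_deriv ?_
  field_simp
  ring

lemma pow_mul_deriv_le_of_radialLaplacian_le {m : ℕ} {f : ℝ → ℝ} (hf : ContDiff ℝ 2 f)
    {c : ℝ} (hnonpos : ∀ r > 0, radialLaplacian (m + 3) f r ≤ 0)
    (hdecay : ∀ r > 1, radialLaplacian (m + 3) f r ≤ -c / r ^ 2) {r : ℝ} (hr : 1 ≤ r) :
    r ^ (m + 2) * deriv f r ≤ -(c / (m + 1)) * (r ^ (m + 1) - 1) := by
  have hflux' : ∀ x > 0, HasDerivAt (fun x => x ^ (m + 2) * deriv f x)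
      (x ^ (m + 2) * radialLaplacian (m + 3) f x) x := fun x hx =>
    hasDerivAt_pow_mul_deriv (N := m + 3) (by omega) hx.ne' (hf.differentiable_deriv_two x)
  have hfluxc : ContinuousOn (fun x => x ^ (m + 2) * deriv f x) (Ici 0) :=
    ((continuous_pow _).mul (hf.continuous_deriv one_le_two)).continuousOn
  have hslope_one : deriv f 1 ≤ 0 := by
    simpa using le_of_hasDerivAt_le (g := fun _ => 0) (g' := fun _ => 0) hfluxc continuousOn_const
      hflux' (fun _ _ => hasDerivAt_const _ _)
      (fun x hx => mul_nonpos_of_nonneg_of_nonpos (by positivity) (hnonpos x hx)) (by simp)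
      zero_le_one
  refine le_of_hasDerivAt_le (g := fun x => -(c / (m + 1)) * (x ^ (m + 1) - 1))
    (g' := fun x => -c * x ^ m) (hfluxc.mono (Ici_subset_Ici.2 zero_le_one)) (by fun_prop)
    (fun x hx => hflux' x (zero_lt_one.trans hx)) (fun x _ => ?_) (fun x hx => ?_)
    (by simpa using hslope_one) hr
  · refine (((hasDerivAt_pow (m + 1) x).sub_const 1).const_mul _).congr_deriv ?_
    field_simp
    push_cast
    ring
  · have hx0 : 0 < x := zero_lt_one.trans hx
    calc x ^ (m + 2) * radialLaplacian (m + 3) f x ≤ x ^ (m + 2) * (-c / x ^ 2) :=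
          mul_le_mul_of_nonneg_left (hdecay x hx) (by positivity)
      _ = -c * x ^ m := by field_simp; ring

lemma tendsto_atBot_of_radialLaplacian_le {N : ℕ} (hN : 3 ≤ N) {f : ℝ → ℝ}
    (hf : ContDiff ℝ 2 f) {c : ℝ} (hc : 0 < c)
    (hnonpos : ∀ r > 0, radialLaplacian N f r ≤ 0)
    (hdecay : ∀ r > 1, radialLaplacian N f r ≤ -c / r ^ 2) : Tendsto f atTop atBot := by
  obtain ⟨m, rfl⟩ : ∃ m, N = m + 3 := ⟨N - 3, by omega⟩
  refine tendsto_atBot_of_deriv_le_neg_div (a := 2) two_pos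
    (by positivity : 0 < c / (2 * (m + 1))) (hf.differentiable two_ne_zero) fun r hr => ?_
  have hr0 : 0 < r := two_pos.trans hr
  have hpow : 2 ≤ r ^ (m + 1) :=
    hr.le.trans (le_self_pow₀ (one_le_two.trans hr.le) (Nat.succ_ne_zero m))
  have hcm : 0 < c / (m + 1) := by positivity
  have key : r ^ (m + 1) * (deriv f r * r) ≤ r ^ (m + 1) * -(c / (2 * (m + 1))) :=
    calc r ^ (m + 1) * (deriv f r * r) = r ^ (m + 2) * deriv f r := by ring
      _ ≤ -(c / (m + 1)) * (r ^ (m + 1) - 1) :=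
        pow_mul_deriv_le_of_radialLaplacian_le hf hnonpos hdecay (one_le_two.trans hr.le)
      _ ≤ r ^ (m + 1) * -(c / (m + 1) / 2) := by nlinarith
      _ = r ^ (m + 1) * -(c / (2 * (m + 1))) := by rw [div_div, mul_comm _ (2 : ℝ)]
  rw [le_div_iff₀ hr0]
  exact le_of_mul_le_mul_left key (pow_pos hr0 _)

theorem stmt9_general (N : ℕ) (hN : 3 ≤ N) (U W : ℝ → ℝ)
    (hU : ContDiff ℝ 2 U) (hW : ContDiff ℝ 2 W)
    (hWpos : ∀ r ≥ (0 : ℝ), 0 < W r)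
    (hWmono : AntitoneOn W (Set.Ici 0))
    (hUpos : ∀ r ≥ (0 : ℝ), 0 < U r)
    (heqU : ∀ r > (0 : ℝ),
      deriv (deriv U) r + (N - 1) * deriv U r / r = W r)
    (heqW : ∀ r > (0 : ℝ),
      deriv (deriv W) r + (N - 1) * deriv W r / r = -(1 / U r)) :
    False := by
  have hΔU : ∀ r > 0, radialLaplacian N U r ≤ W 0 := fun r hr =>
    (heqU r hr).trans_le (hWmono self_mem_Ici (mem_Ici.2 hr.le) hr.le)
  set C := U 0 + W 0 / (2 * N) with hCdef
  have hU0 := hUpos 0 le_rfl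
  have hC : 0 < C := by have := hWpos 0 le_rfl; positivity
  have hUquad : ∀ r ≥ 1, U r ≤ C * r ^ 2 := fun r hr => by
    have hr2 : 1 ≤ r ^ 2 := one_le_pow₀ hr
    have := le_add_mul_sq_of_radialLaplacian_le (by omega) hU hΔU (zero_le_one.trans hr)
    rw [hCdef]
    nlinarith
  have hΔW : ∀ r > 1, radialLaplacian N W r ≤ -C⁻¹ / r ^ 2 := fun r hr => by
    have hUr := hUpos r (zero_le_one.trans hr.le)
    rw [radialLaplacian, heqW r (zero_lt_one.trans hr), neg_div, neg_le_neg_iff, inv_div_left,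
      one_div]
    exact inv_anti₀ hUr ((hUquad r hr.le).trans_eq (mul_comm _ _))
  have hWbot : Tendsto W atTop atBot :=
    tendsto_atBot_of_radialLaplacian_le hN hW (inv_pos.2 hC)
      (fun r hr => (heqW r hr).trans_le (neg_nonpos.2 (one_div_nonneg.2 (hUpos r hr.le).le))) hΔW
  obtain ⟨r, hWr, hr⟩ :=
    ((hWbot.eventually (eventually_le_atBot 0)).and (eventually_ge_atTop 0)).exists
  exact (hWpos r hr).not_ge hWr

theorem stmt9 (N : ℕ) (hN : 3 ≤ N) (U W : ℝ → ℝ) (α : ℝ) (hα : 0 < α)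
    (hU : ContDiff ℝ 2 U) (hW : ContDiff ℝ 2 W)
    (hWpos : ∀ r ≥ (0 : ℝ), 0 < W r)
    (hWmono : AntitoneOn W (Set.Ici 0))
    (hWlim : Filter.Tendsto W Filter.atTop (nhds α))
    (hUpos : ∀ r ≥ (0 : ℝ), 0 < U r)
    (hU0 : deriv U 0 = 0)
    (heqU : ∀ r > (0 : ℝ),
      deriv (deriv U) r + (N - 1) * deriv U r / r = W r)
    (heqW : ∀ r > (0 : ℝ),
      deriv (deriv W) r + (N - 1) * deriv W r / r = -(1 / U r)) :
    False :=
  stmt9_general N hN U W hU hW hWpos hWmono hUpos heqU heqW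
end

section
/- For N = 4 and c = 1/(8√6) (with appropriate normalization), the function u : ℝ⁴ → ℝ defined by u(x) = -4 ln(1 + c|x|²) satisfies Δ²u(x) = e^{u(x)} for all x ∈ ℝ⁴. -/
/-! For a profile `φ` of `s = ‖x‖²`, differentiating along the coordinate lines gives
`Δ (φ (‖x‖²)) = 2 n φ'(s) + 4 s φ''(s)` in `ℝⁿ`. With `w = 1 + c s`, two applications in `ℝ⁴` send
`-4 log w` to `-16 c (w⁻¹ + w⁻²)` and then to `384 c² w⁻⁴`; the choice of `c` makes `384 c² = 1`,
and `w⁻⁴ = exp (-4 log w)`. -/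

/-- The Laplacian of `f : ℝ^n → ℝ` at `x`: sum of the second derivatives
along the coordinate directions. -/
noncomputable def lap {n : ℕ} (f : EuclideanSpace ℝ (Fin n) → ℝ)
    (x : EuclideanSpace ℝ (Fin n)) : ℝ :=
  ∑ i : Fin n, iteratedDeriv 2 (fun t : ℝ => f (x + t • EuclideanSpace.single i (1 : ℝ))) 0

open Real

lemma EuclideanSpace.norm_add_smul_single_sq {ι : Type*} [Fintype ι] [DecidableEq ι]
    (x : EuclideanSpace ℝ ι) (i : ι) (t : ℝ) :
    ‖x + t • EuclideanSpace.single i (1 : ℝ)‖ ^ 2 = ‖x‖ ^ 2 + 2 * x i * t + t ^ 2 := by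
  rw [norm_add_sq_real, real_inner_smul_right, EuclideanSpace.inner_single_right, norm_smul,
    PiLp.norm_single]
  simp only [ringHom_apply, one_mul, norm_eq_abs, norm_one, mul_one, sq_abs]
  ring

section Radial

variable {φ φ' φ'' : ℝ → ℝ} (hφ : ∀ s, 0 ≤ s → HasDerivAt φ (φ' s) s)
  (hφ' : ∀ s, 0 ≤ s → HasDerivAt φ' (φ'' s) s)
include hφ hφ'

lemma iteratedDeriv_two_comp_norm_sq_line {ι : Type*} [Fintype ι] [DecidableEq ι]
    (x : EuclideanSpace ℝ ι) (i : ι) :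
    iteratedDeriv 2 (fun t : ℝ => φ (‖x + t • EuclideanSpace.single i (1 : ℝ)‖ ^ 2)) 0
      = 2 * φ' (‖x‖ ^ 2) + 4 * x i ^ 2 * φ'' (‖x‖ ^ 2) := by
  let q : ℝ → ℝ := fun t => ‖x‖ ^ 2 + 2 * x i * t + t ^ 2
  have hq_nonneg (t : ℝ) : 0 ≤ q t := by
    simp only [q, ← EuclideanSpace.norm_add_smul_single_sq]; positivity
  have hq (t : ℝ) : HasDerivAt q (2 * x i + 2 * t) t := by
    simpa using (((hasDerivAt_id t).const_mul (2 * x i)).const_add (‖x‖ ^ 2)).fun_add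
      (hasDerivAt_pow 2 t)
  have hline : (fun t : ℝ => φ (‖x + t • EuclideanSpace.single i (1 : ℝ)‖ ^ 2)) = φ ∘ q :=
    funext fun t => by simp only [Function.comp, q, EuclideanSpace.norm_add_smul_single_sq]
  have hderiv : deriv (φ ∘ q) = fun t => φ' (q t) * (2 * x i + 2 * t) :=
    funext fun t => ((hφ _ (hq_nonneg t)).comp t (hq t)).deriv
  have hderiv2 : HasDerivAt (fun t => φ' (q t) * (2 * x i + 2 * t))
      (φ'' (q 0) * (2 * x i + 2 * 0) * (2 * x i + 2 * 0) + φ' (q 0) * 2) 0 := by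
    simpa using ((hφ' _ (hq_nonneg 0)).comp 0 (hq 0)).fun_mul
      (((hasDerivAt_id (0 : ℝ)).const_mul 2).const_add (2 * x i))
  have hq0 : q 0 = ‖x‖ ^ 2 := by simp [q]
  rw [hline, iteratedDeriv_succ, iteratedDeriv_one, hderiv, hderiv2.deriv, hq0]
  ring

lemma lap_comp_norm_sq {n : ℕ} (x : EuclideanSpace ℝ (Fin n)) :
    lap (fun y => φ (‖y‖ ^ 2)) x = 2 * n * φ' (‖x‖ ^ 2) + 4 * ‖x‖ ^ 2 * φ'' (‖x‖ ^ 2) := by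
  simp only [lap, iteratedDeriv_two_comp_norm_sq_line hφ hφ', Finset.sum_add_distrib,
    Finset.sum_const, Finset.card_univ, Fintype.card_fin, nsmul_eq_mul, ← Finset.sum_mul,
    ← Finset.mul_sum, ← EuclideanSpace.real_norm_sq_eq]
  ring

end Radial

lemma hasDerivAt_one_add_mul (c s : ℝ) : HasDerivAt (fun s => 1 + c * s) c s := by
  simpa using ((hasDerivAt_id s).const_mul c).const_add 1

lemma hasDerivAt_inv_one_add_mul_pow (c : ℝ) (k : ℕ) {s : ℝ} (hs : 1 + c * s ≠ 0) :
    HasDerivAt (fun s => ((1 + c * s) ^ (k + 1))⁻¹)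
      (-((k + 1) * c) * ((1 + c * s) ^ (k + 2))⁻¹) s := by
  refine (((hasDerivAt_one_add_mul c s).fun_pow (k + 1)).fun_inv
    (pow_ne_zero _ hs)).congr_deriv ?_
  rw [Nat.add_sub_cancel]
  field_simp
  push_cast
  ring

section LogProfile

variable {c : ℝ} (hc : 0 ≤ c)
include hc

lemma lap_neg_four_mul_log_one_add_mul_norm_sq :
    lap (fun y : EuclideanSpace ℝ (Fin 4) => -4 * log (1 + c * ‖y‖ ^ 2))
      = fun y => -16 * c * (((1 + c * ‖y‖ ^ 2) ^ 1)⁻¹ + ((1 + c * ‖y‖ ^ 2) ^ 2)⁻¹) := by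
  have hw (s : ℝ) (hs : 0 ≤ s) : 1 + c * s ≠ 0 := by positivity
  have h1 (s : ℝ) (hs : 0 ≤ s) :
      HasDerivAt (fun s => -4 * log (1 + c * s)) (-4 * c * ((1 + c * s) ^ 1)⁻¹) s :=
    (((hasDerivAt_one_add_mul c s).log (hw s hs)).const_mul (-4)).congr_deriv (by ring)
  have h2 (s : ℝ) (hs : 0 ≤ s) : HasDerivAt (fun s => -4 * c * ((1 + c * s) ^ 1)⁻¹)
      (4 * c ^ 2 * ((1 + c * s) ^ 2)⁻¹) s :=
    ((hasDerivAt_inv_one_add_mul_pow c 0 (hw s hs)).const_mul (-4 * c)).congr_deriv (by ring)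
  funext y
  rw [lap_comp_norm_sq h1 h2]
  have hy := hw _ (sq_nonneg ‖y‖)
  field_simp
  ring

lemma lap_lap_neg_four_mul_log_one_add_mul_norm_sq (x : EuclideanSpace ℝ (Fin 4)) :
    lap (lap (fun y : EuclideanSpace ℝ (Fin 4) => -4 * log (1 + c * ‖y‖ ^ 2))) x
      = 384 * c ^ 2 * ((1 + c * ‖x‖ ^ 2) ^ 4)⁻¹ := by
  have hw (s : ℝ) (hs : 0 ≤ s) : 1 + c * s ≠ 0 := by positivity
  have h1 (s : ℝ) (hs : 0 ≤ s) :
      HasDerivAt (fun s => -16 * c * (((1 + c * s) ^ 1)⁻¹ + ((1 + c * s) ^ 2)⁻¹))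
        (16 * c ^ 2 * (((1 + c * s) ^ 2)⁻¹ + 2 * ((1 + c * s) ^ 3)⁻¹)) s :=
    (((hasDerivAt_inv_one_add_mul_pow c 0 (hw s hs)).add
      (hasDerivAt_inv_one_add_mul_pow c 1 (hw s hs))).const_mul (-16 * c)).congr_deriv (by ring)
  have h2 (s : ℝ) (hs : 0 ≤ s) :
      HasDerivAt (fun s => 16 * c ^ 2 * (((1 + c * s) ^ 2)⁻¹ + 2 * ((1 + c * s) ^ 3)⁻¹))
        (-32 * c ^ 3 * (((1 + c * s) ^ 3)⁻¹ + 3 * ((1 + c * s) ^ 4)⁻¹)) s :=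
    (((hasDerivAt_inv_one_add_mul_pow c 1 (hw s hs)).add
      ((hasDerivAt_inv_one_add_mul_pow c 2 (hw s hs)).const_mul 2)).const_mul
        (16 * c ^ 2)).congr_deriv (by ring)
  rw [lap_neg_four_mul_log_one_add_mul_norm_sq hc, lap_comp_norm_sq h1 h2]
  have hx := hw _ (sq_nonneg ‖x‖)
  field_simp
  ring

end LogProfile

theorem stmt10 (c : ℝ) (hc : c = 1 / (8 * Real.sqrt 6))
    (u : EuclideanSpace ℝ (Fin 4) → ℝ)
    (hu : ∀ x, u x = -4 * Real.log (1 + c * ‖x‖ ^ 2)) :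
    ∀ x, lap (lap u) x = Real.exp (u x) := by
  intro x
  have hc0 : 0 ≤ c := by rw [hc]; positivity
  have hc2 : 384 * c ^ 2 = 1 := by
    rw [hc, div_pow, mul_pow, sq_sqrt (by norm_num : (0 : ℝ) ≤ 6)]; norm_num
  have hw : 0 < 1 + c * ‖x‖ ^ 2 := by positivity
  rw [funext hu, lap_lap_neg_four_mul_log_one_add_mul_norm_sq hc0, hc2, one_mul,
    ← exp_log (pow_pos hw 4), ← exp_neg, log_pow]
  congr 1
  push_cast
  ring
end

section
/- Let ε > 0 and let ψ(r) = r(1+r)⁵ e^{-εr²} / (2(r+4)) for r ≥ 0. If b ≥ ln(sup_{r≥0} ψ(r)), then the function ũ(r) = -εr² + ln(1+r) - b satisfies (r⁴ ũ'''(r))' ≥ r⁴ e^{ũ(r)} for all r > 0. -/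
/-!
Here `ũ''' = 2 / (1 + r)³`, so `(r⁴ ũ''')' = 2 r³ (r + 4) / (1 + r)⁴`, while
`r⁴ e^{ũ} = r⁴ (1 + r) e^{-εr²} e^{-b}`. Dividing out, the inequality at `r` is exactly
`ψ(r) ≤ e^b`, which holds since `ψ(r) ≤ sup ψ ≤ e^b`. For this, `sup ψ` has to be a genuine
supremum: `ψ` is bounded because `(1 + r²)³ e^{-εr²} ≤ 6 e^ε / ε³`, by `t³ / 3! ≤ e^t`.
-/

open Real Set Filter

section

variable {𝕜 F : Type*} [NontriviallyNormedField 𝕜] [NormedAddCommGroup F] [NormedSpace 𝕜 F]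
  {f f₁ f₂ : 𝕜 → F} {s : Set 𝕜}

theorem hasDerivAt_deriv_of_forall_hasDerivAt (hs : IsOpen s)
    (hf : ∀ x ∈ s, HasDerivAt f (f₁ x) x) (hf₁ : ∀ x ∈ s, HasDerivAt f₁ (f₂ x) x) :
    ∀ x ∈ s, HasDerivAt (deriv f) (f₂ x) x := fun x hx =>
  (hf₁ x hx).congr_of_eventuallyEq <|
    eventuallyEq_of_mem (hs.mem_nhds hx) fun y hy => (hf y hy).deriv

end

theorem iteratedDeriv_three_quadratic_add_log (ε b : ℝ) {x : ℝ} (hx : -1 < x) :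
    iteratedDeriv 3 (fun r => -ε * r ^ 2 + log (1 + r) - b) x = 2 / (1 + x) ^ 3 := by
  have h₁ : ∀ y ∈ Ioi (-1 : ℝ), HasDerivAt (fun r => -ε * r ^ 2 + log (1 + r) - b)
      (-(2 * ε) * y + (1 + y)⁻¹) y := fun y hy =>
    have hy : 1 + y ≠ 0 := by linarith [mem_Ioi.mp hy]
    (((((hasDerivAt_id' y).fun_pow 2).const_mul (-ε)).fun_add
      (((hasDerivAt_id' y).const_add 1).log hy)).sub_const b).congr_deriv (by field_simp; ring)
  have h₂ : ∀ y ∈ Ioi (-1 : ℝ), HasDerivAt (fun r => -(2 * ε) * r + (1 + r)⁻¹)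
      (-(2 * ε) - ((1 + y) ^ 2)⁻¹) y := fun y hy =>
    have hy : 1 + y ≠ 0 := by linarith [mem_Ioi.mp hy]
    (((hasDerivAt_id' y).const_mul (-(2 * ε))).fun_add
      (((hasDerivAt_id' y).const_add 1).fun_inv hy)).congr_deriv (by field_simp; ring)
  have h₃ : ∀ y ∈ Ioi (-1 : ℝ), HasDerivAt (fun r => -(2 * ε) - ((1 + r) ^ 2)⁻¹)
      (2 / (1 + y) ^ 3) y := fun y hy =>
    have hy : 1 + y ≠ 0 := by linarith [mem_Ioi.mp hy]
    ((hasDerivAt_const y (-(2 * ε))).fun_sub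
      ((((hasDerivAt_id' y).const_add 1).fun_pow 2).fun_inv (pow_ne_zero 2 hy))).congr_deriv
      (by field_simp; ring)
  rw [iteratedDeriv_eq_iterate]
  exact (hasDerivAt_deriv_of_forall_hasDerivAt isOpen_Ioi
    (hasDerivAt_deriv_of_forall_hasDerivAt isOpen_Ioi h₁ h₂) h₃ x hx).deriv

theorem hasDerivAt_pow_four_mul_two_div_one_add_pow_three {r : ℝ} (hr : 1 + r ≠ 0) :
    HasDerivAt (fun x => x ^ 4 * (2 / (1 + x) ^ 3)) (2 * r ^ 3 * (r + 4) / (1 + r) ^ 4) r := by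
  have h := (hasDerivAt_pow 4 r).fun_mul
    (((((hasDerivAt_id' r).const_add 1).fun_pow 3).fun_inv (pow_ne_zero 3 hr)).const_mul 2)
  simp only [← div_eq_mul_inv] at h
  exact h.congr_deriv (by field_simp; ring)

theorem deriv_pow_four_mul_iteratedDeriv_three (ε b : ℝ) {r : ℝ} (hr : -1 < r) :
    deriv (fun x => x ^ 4 * iteratedDeriv 3 (fun r => -ε * r ^ 2 + log (1 + r) - b) x) r =
      2 * r ^ 3 * (r + 4) / (1 + r) ^ 4 := by
  have hnear : (fun x => x ^ 4 * iteratedDeriv 3 (fun r => -ε * r ^ 2 + log (1 + r) - b) x)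
      =ᶠ[nhds r] fun x => x ^ 4 * (2 / (1 + x) ^ 3) :=
    eventuallyEq_of_mem (isOpen_Ioi.mem_nhds (mem_Ioi.mpr hr)) fun y hy => by
      simp only [iteratedDeriv_three_quadratic_add_log ε b (mem_Ioi.mp hy)]
  rw [hnear.deriv_eq]
  exact (hasDerivAt_pow_four_mul_two_div_one_add_pow_three (by linarith)).deriv

theorem one_add_sq_pow_three_mul_exp_neg_le {ε : ℝ} (hε : 0 < ε) (x : ℝ) :
    (1 + x ^ 2) ^ 3 * exp (-ε * x ^ 2) ≤ 6 * exp ε / ε ^ 3 := by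
  have h := pow_div_factorial_le_exp (x := ε * (1 + x ^ 2)) (by positivity) 3
  rw [div_le_iff₀ (by positivity)] at h
  rw [le_div_iff₀ (by positivity)]
  calc (1 + x ^ 2) ^ 3 * exp (-ε * x ^ 2) * ε ^ 3
      = (ε * (1 + x ^ 2)) ^ 3 * exp (-ε * x ^ 2) := by ring
    _ ≤ exp (ε * (1 + x ^ 2)) * (Nat.factorial 3 : ℝ) * exp (-ε * x ^ 2) := by gcongr
    _ = 6 * exp ε := by
      rw [mul_right_comm, ← exp_add]
      norm_num [Nat.factorial]
      ring_nf

theorem mul_one_add_pow_five_mul_exp_div_le {ε x : ℝ} (hε : 0 < ε) (hx : 0 ≤ x) :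
    x * (1 + x) ^ 5 * exp (-ε * x ^ 2) / (2 * (x + 4)) ≤ 24 * exp ε / ε ^ 3 := by
  have hpoly : x * (1 + x) ^ 5 ≤ 8 * (x + 4) * (1 + x ^ 2) ^ 3 := by
    have h₁ : (1 + x) ^ 5 ≤ (1 + x) ^ 6 := pow_le_pow_right₀ (by linarith) (by norm_num)
    have h₂ : (1 + x) ^ 6 ≤ 8 * (1 + x ^ 2) ^ 3 := by
      have hsq : (1 + x) ^ 2 ≤ 2 * (1 + x ^ 2) := by nlinarith [sq_nonneg (1 - x)]
      calc (1 + x) ^ 6 = ((1 + x) ^ 2) ^ 3 := by ring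
        _ ≤ (2 * (1 + x ^ 2)) ^ 3 := by gcongr
        _ = 8 * (1 + x ^ 2) ^ 3 := by ring
    calc x * (1 + x) ^ 5 ≤ (x + 4) * (1 + x) ^ 6 := by gcongr; linarith
      _ ≤ (x + 4) * (8 * (1 + x ^ 2) ^ 3) := by gcongr
      _ = 8 * (x + 4) * (1 + x ^ 2) ^ 3 := by ring
  calc x * (1 + x) ^ 5 * exp (-ε * x ^ 2) / (2 * (x + 4))
      ≤ 8 * (x + 4) * (1 + x ^ 2) ^ 3 * exp (-ε * x ^ 2) / (2 * (x + 4)) := by gcongr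
    _ = 4 * ((1 + x ^ 2) ^ 3 * exp (-ε * x ^ 2)) := by field_simp; ring
    _ ≤ 4 * (6 * exp ε / ε ^ 3) := by gcongr; exact one_add_sq_pow_three_mul_exp_neg_le hε x
    _ = 24 * exp ε / ε ^ 3 := by ring

theorem le_exp_of_log_sSup_le {S : Set ℝ} (hS : BddAbove S) {x b : ℝ} (hx : x ∈ S)
    (hx₀ : 0 < x) (hb : log (sSup S) ≤ b) : x ≤ exp b :=
  calc x ≤ sSup S := le_csSup hS hx
    _ = exp (log (sSup S)) := (exp_log (hx₀.trans_le (le_csSup hS hx))).symm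
    _ ≤ exp b := exp_le_exp.mpr hb

theorem pow_four_mul_exp_le_of_le_exp {ε b r : ℝ} (hr : 0 < r)
    (h : r * (1 + r) ^ 5 * exp (-ε * r ^ 2) / (2 * (r + 4)) ≤ exp b) :
    r ^ 4 * exp (-ε * r ^ 2 + log (1 + r) - b) ≤ 2 * r ^ 3 * (r + 4) / (1 + r) ^ 4 := by
  rw [div_le_iff₀ (by positivity)] at h
  rw [exp_sub, exp_add, exp_log (by linarith), le_div_iff₀ (by positivity)]
  calc r ^ 4 * (exp (-ε * r ^ 2) * (1 + r) / exp b) * (1 + r) ^ 4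
      = r ^ 3 * (r * (1 + r) ^ 5 * exp (-ε * r ^ 2)) / exp b := by ring
    _ ≤ r ^ 3 * (exp b * (2 * (r + 4))) / exp b := by gcongr
    _ = 2 * r ^ 3 * (r + 4) := by field_simp

theorem stmt13 (ε b : ℝ) (hε : 0 < ε)
    (ψ : ℝ → ℝ)
    (hψ : ∀ r, ψ r = r * (1 + r) ^ 5 * Real.exp (-ε * r ^ 2) / (2 * (r + 4)))
    (hb : Real.log (sSup (ψ '' Set.Ici 0)) ≤ b)
    (w : ℝ → ℝ)
    (hw : ∀ r, w r = -ε * r ^ 2 + Real.log (1 + r) - b) :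
    ∀ r > (0 : ℝ),
      r ^ 4 * Real.exp (w r) ≤ deriv (fun r => r ^ 4 * iteratedDeriv 3 w r) r := by
  intro r hr
  obtain rfl : w = _ := funext hw
  have hbdd : BddAbove (ψ '' Ici 0) := ⟨24 * exp ε / ε ^ 3, by
    rintro _ ⟨x, hx, rfl⟩
    rw [hψ]
    exact mul_one_add_pow_five_mul_exp_div_le hε hx⟩
  have hψr : ψ r ≤ exp b :=
    le_exp_of_log_sSup_le hbdd ⟨r, hr.le, rfl⟩ (by rw [hψ]; positivity) hb
  rw [deriv_pow_four_mul_iteratedDeriv_three ε b (by linarith)]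
  exact pow_four_mul_exp_le_of_le_exp hr (hψ r ▸ hψr)
end

section
/- Let u : [0,∞) → ℝ be a C⁴ function satisfying (r⁴ u'''(r))' = r⁴ e^{u(r)} for all r > 0, with u'''(0) = 0, and suppose u(r) ≤ -Cr for all large r для some C > 0. Then ∫₀^∞ s⁴ e^{u(s)} ds < ∞ and u'''(r) ≤ r^{-4} ∫₀^∞ s⁴ e^{u(s)} ds for all r > 0. -/
/-! Integrating `(r⁴u''')' = r⁴eᵘ` from `0`, where `u'''` vanishes, gives
`r⁴u'''(r) = ∫₀ʳ s⁴eᵘ ≤ ∫₀^∞ s⁴eᵘ`; the last integral is finite because the linear decay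
of `u` makes `s⁴eᵘ` dominated by the integrable `s⁴e^{-Cs}`. -/

open MeasureTheory Set Filter Real

theorem integrableOn_Ioi_pow_mul_exp_neg_mul (n : ℕ) {C : ℝ} (hC : 0 < C) :
    IntegrableOn (fun x : ℝ => x ^ n * exp (-C * x)) (Ioi 0) := by
  have hn : (-1 : ℝ) < n := by linarith [n.cast_nonneg (α := ℝ)]
  simpa only [rpow_natCast, rpow_one] using integrableOn_rpow_mul_exp_neg_mul_rpow hn one_pos hC

theorem integrableOn_Ioi_pow_mul_exp_of_le_neg_mul (n : ℕ) {g : ℝ → ℝ} (hg : Continuous g)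
    {C : ℝ} (hC : 0 < C) (hdecay : ∀ᶠ r in atTop, g r ≤ -C * r) :
    IntegrableOn (fun s => s ^ n * exp (g s)) (Ioi 0) := by
  have hcont : Continuous fun s => s ^ n * exp (g s) := by fun_prop
  have hbound : (fun s => s ^ n * exp (g s)) =O[atTop] fun s => s ^ n * exp (-C * s) := by
    refine Asymptotics.IsBigO.of_bound 1 ?_
    filter_upwards [hdecay, eventually_ge_atTop 0] with s hs hs0
    simp only [norm_mul, norm_pow, norm_eq_abs, abs_exp, abs_of_nonneg hs0, one_mul]
    gcongr
  have hIci : IntegrableOn (fun s => s ^ n * exp (g s)) (Ici 0) :=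
    (hcont.continuousOn.locallyIntegrableOn measurableSet_Ici).integrableOn_of_isBigO_atTop hbound
      ⟨Ioi 0, Ioi_mem_atTop 0, integrableOn_Ioi_pow_mul_exp_neg_mul n hC⟩
  exact hIci.mono_set Ioi_subset_Ici_self

theorem le_integral_Ioi_of_hasDerivAt {F f : ℝ → ℝ} (hFc : ContinuousOn F (Ici 0))
    (hF0 : F 0 = 0) (hF' : ∀ x > 0, HasDerivAt F (f x) x) (hf : IntegrableOn f (Ioi 0))
    (hf_nonneg : ∀ x > 0, 0 ≤ f x) {r : ℝ} (hr : 0 ≤ r) :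
    F r ≤ ∫ s in Ioi 0, f s := by
  have hf_Ioc : IntegrableOn f (Ioc 0 r) := hf.mono_set Ioc_subset_Ioi_self
  have hFTC : ∫ s in (0 : ℝ)..r, f s = F r - F 0 :=
    intervalIntegral.integral_eq_sub_of_hasDerivAt_of_le hr (hFc.mono Icc_subset_Ici_self)
      (fun x hx => hF' x hx.1) ((intervalIntegrable_iff_integrableOn_Ioc_of_le hr).2 hf_Ioc)
  calc F r = ∫ s in Ioc 0 r, f s := by
        rw [← intervalIntegral.integral_of_le hr, hFTC, hF0, sub_zero]
    _ ≤ ∫ s in Ioi 0, f s :=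
        setIntegral_mono_set hf ((ae_restrict_iff' measurableSet_Ioi).2 (.of_forall hf_nonneg))
          (.of_forall Ioc_subset_Ioi_self)

theorem stmt14 (u : ℝ → ℝ) (hu : ContDiff ℝ 4 u)
    (heq : ∀ r > (0 : ℝ),
      deriv (fun r => r ^ 4 * iteratedDeriv 3 u r) r = r ^ 4 * Real.exp (u r))
    (hu3 : iteratedDeriv 3 u 0 = 0)
    (hdecay : ∃ C > (0 : ℝ), ∃ R : ℝ, ∀ r ≥ R, u r ≤ -C * r) :
    IntegrableOn (fun s => s ^ 4 * Real.exp (u s)) (Set.Ioi 0) ∧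
      ∀ r > (0 : ℝ),
        iteratedDeriv 3 u r ≤ (r ^ 4)⁻¹ * ∫ s in Set.Ioi (0 : ℝ), s ^ 4 * Real.exp (u s) := by
  obtain ⟨C, hC, R, hR⟩ := hdecay
  have hint := integrableOn_Ioi_pow_mul_exp_of_le_neg_mul 4 hu.continuous hC
    (eventually_atTop.2 ⟨R, hR⟩)
  refine ⟨hint, fun r hr => ?_⟩
  have hdiff : Differentiable ℝ fun r => r ^ 4 * iteratedDeriv 3 u r :=
    (differentiable_pow 4).mul (hu.differentiable_iteratedDeriv 3 (by norm_num))
  have hflux := le_integral_Ioi_of_hasDerivAt hdiff.continuous.continuousOn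
    (by simp [hu3]) (fun x hx => heq x hx ▸ (hdiff x).hasDerivAt) hint
    (fun x _ => by positivity) hr.le
  exact (le_inv_mul_iff₀ (by positivity)).2 hflux
end

section
/- Let N ≥ 3, p > 0, and let u, w : [0,∞) → (0,∞) be C² functions with u'(0) = w'(0) = 0, w nonincreasing, u nondecreasing, u''(r) + (N-1)u'(r)/r = w(r), and w''(r) + (N-1)w'(r)/r = -u(r)^{-p} for r > 0. Then there exists C > 0 such that w(r) ≥ C r² u(r)^{-p} for all r > 0. -/
/-!
Multiplying the radial equation for `w` by `r ^ (N - 1)` and integrating gives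
`-r ^ (N - 1) * w' r = ∫₀ʳ t ^ (N - 1) * u t ^ (-p)`, a nondecreasing function of `r`. Hence on
`[r, 2r]` the slope `-w'` is at least `(2r) ^ (1 - N)` times that integral at `r`, which, as
`u ^ (-p)` is nonincreasing, is at least `u r ^ (-p) * r ^ N / N`. The mean value theorem on
`[r, 2r]` and `w (2r) > 0` give `w r ≥ r ^ 2 * u r ^ (-p) / (N * 2 ^ (N - 1))`.
-/

open Set intervalIntegral MeasureTheory

theorem pow_mul_deriv_eq_neg_integral_of_radial_eq {N : ℕ} (hN : 2 ≤ N) {w g : ℝ → ℝ}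
    (hw : ContDiff ℝ 2 w) (hg : ContinuousOn g (Ici 0))
    (heq : ∀ r > (0 : ℝ), deriv (deriv w) r + ((N : ℝ) - 1) * deriv w r / r = -g r)
    {s : ℝ} (hs : 0 ≤ s) :
    s ^ (N - 1) * deriv w s = -∫ t in (0 : ℝ)..s, t ^ (N - 1) * g t := by
  obtain ⟨k, rfl⟩ := Nat.exists_eq_add_of_le' hN
  have hw' : ContDiff ℝ 1 (deriv w) := hw.deriv' (n := 1)
  have hG : ∀ x > (0 : ℝ),
      HasDerivAt (fun s => s ^ (k + 1) * deriv w s) (-(x ^ (k + 1) * g x)) x := by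
    intro x hx
    refine ((hasDerivAt_pow (k + 1) x).fun_mul
      (hw'.differentiable one_ne_zero x).hasDerivAt).congr_deriv ?_
    have hdd : deriv (deriv w) x = -g x - (k + 1) * deriv w x / x := by
      have := heq x hx
      push_cast at this
      linear_combination this
    rw [hdd, Nat.add_sub_cancel, pow_succ]
    push_cast
    field_simp
    ring
  have hftc := integral_eq_sub_of_hasDerivAt_of_le hs
    ((continuous_pow _).mul hw'.continuous).continuousOn (fun x hx => hG x hx.1)
    (((continuous_pow _).continuousOn.mul (hg.mono Icc_subset_Ici_self)).neg
      |>.intervalIntegrable_of_Icc hs)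
  simp only [intervalIntegral.integral_neg, Pi.mul_apply] at hftc
  show s ^ (k + 1) * deriv w s = -∫ t in (0 : ℝ)..s, t ^ (k + 1) * g t
  simpa using hftc.symm

theorem mul_pow_div_le_integral_pow_mul_of_antitoneOn (k : ℕ) {h : ℝ → ℝ} {r : ℝ}
    (hr : 0 ≤ r) (hh : ContinuousOn h (Icc 0 r)) (hh' : AntitoneOn h (Icc 0 r)) :
    h r * (r ^ (k + 1) / (k + 1)) ≤ ∫ t in (0 : ℝ)..r, t ^ k * h t := by
  have hle : ∀ t ∈ Icc (0 : ℝ) r, h r * t ^ k ≤ t ^ k * h t := fun t ht => by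
    rw [mul_comm]
    exact mul_le_mul_of_nonneg_left (hh' ht ⟨hr, le_rfl⟩ ht.2) (pow_nonneg ht.1 k)
  calc h r * (r ^ (k + 1) / (k + 1)) = ∫ t in (0 : ℝ)..r, h r * t ^ k := by
        simp [integral_pow]
    _ ≤ ∫ t in (0 : ℝ)..r, t ^ k * h t :=
        integral_mono_on hr (((continuous_pow k).const_mul _).intervalIntegrable _ _)
          (((continuous_pow k).continuousOn.mul hh).intervalIntegrable_of_Icc hr) hle

theorem monotoneOn_integral_pow_mul (k : ℕ) {h : ℝ → ℝ} (hh : ContinuousOn h (Ici 0))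
    (hh0 : ∀ t ≥ (0 : ℝ), 0 ≤ h t) :
    MonotoneOn (fun s => ∫ t in (0 : ℝ)..s, t ^ k * h t) (Ici 0) := fun _ ha _ _ hab =>
  integral_mono_interval le_rfl ha hab
    (ae_restrict_of_forall_mem measurableSet_Ioc fun t ht =>
      mul_nonneg (pow_nonneg ht.1.le k) (hh0 t ht.1.le))
    (((continuous_pow k).continuousOn.mul (hh.mono Icc_subset_Ici_self)).intervalIntegrable_of_Icc
      (le_trans ha hab))

theorem mul_div_le_sub_of_pow_mul_deriv_eq_neg (k : ℕ) {w F : ℝ → ℝ} {r : ℝ} (hr : 0 < r)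
    (hw : Differentiable ℝ w) (hF : MonotoneOn F (Icc r (2 * r))) (hFr : 0 ≤ F r)
    (hderiv : ∀ s ∈ Icc r (2 * r), s ^ k * deriv w s = -F s) :
    r * (F r / (2 * r) ^ k) ≤ w r - w (2 * r) := by
  have hslope : ∀ s ∈ Icc r (2 * r), deriv w s ≤ -(F r / (2 * r) ^ k) := by
    intro s hs
    have hs0 : 0 < s := hr.trans_le hs.1
    have hws : deriv w s = -(F s / s ^ k) := by
      rw [← neg_div, ← hderiv s hs]
      field_simp
    rw [hws, neg_le_neg_iff]
    have hFrs : F r ≤ F s := hF ⟨le_rfl, by linarith⟩ hs hs.1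
    exact div_le_div₀ (hFr.trans hFrs) hFrs (pow_pos hs0 k) (pow_le_pow_left₀ hs0.le hs.2 k)
  have hmvt := (convex_Icc r (2 * r)).image_sub_le_mul_sub_of_deriv_le hw.continuous.continuousOn
    hw.differentiableOn (fun x hx => hslope x (interior_subset hx))
    r ⟨le_rfl, by linarith⟩ (2 * r) ⟨by linarith, le_rfl⟩ (by linarith)
  linarith

theorem stmt18_general (N : ℕ) (hN : 3 ≤ N) (p : ℝ) (hp : 0 < p) (u w : ℝ → ℝ)
    (hu : ContDiff ℝ 2 u) (hw : ContDiff ℝ 2 w)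
    (hupos : ∀ r ≥ (0 : ℝ), 0 < u r) (hwpos : ∀ r ≥ (0 : ℝ), 0 < w r)
    (humono : MonotoneOn u (Set.Ici 0))
    (heqw : ∀ r > (0 : ℝ),
      deriv (deriv w) r + ((N : ℝ) - 1) * deriv w r / r = -(u r) ^ (-p)) :
    ∃ C > (0 : ℝ), ∀ r > (0 : ℝ), C * r ^ 2 * (u r) ^ (-p) ≤ w r := by
  set k := N - 1
  have hk : (k : ℝ) + 1 = N := by norm_cast; omega
  set g : ℝ → ℝ := fun t => u t ^ (-p)
  have hg : ContinuousOn g (Ici 0) :=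
    hu.continuous.continuousOn.rpow_const fun t ht => Or.inl (hupos t ht).ne'
  have hg0 : ∀ t ≥ (0 : ℝ), 0 ≤ g t := fun t ht => Real.rpow_nonneg (hupos t ht).le _
  have hg' : AntitoneOn g (Ici 0) := fun a ha b hb hab =>
    Real.rpow_le_rpow_of_nonpos (hupos a ha) (humono ha hb hab) (neg_nonpos.mpr hp.le)
  refine ⟨1 / (N * 2 ^ k), by positivity, fun r hr => ?_⟩
  have hlow := mul_pow_div_le_integral_pow_mul_of_antitoneOn k hr.le
    (hg.mono Icc_subset_Ici_self) (hg'.mono Icc_subset_Ici_self)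
  have hdecay := mul_div_le_sub_of_pow_mul_deriv_eq_neg k hr (hw.differentiable two_ne_zero)
    ((monotoneOn_integral_pow_mul k hg hg0).mono fun s hs => hr.le.trans hs.1)
    (integral_nonneg hr.le fun t ht => mul_nonneg (pow_nonneg ht.1 k) (hg0 t ht.1))
    fun s hs => pow_mul_deriv_eq_neg_integral_of_radial_eq (by omega) hw hg
      (fun r hr => by simpa using heqw r hr) (hr.le.trans hs.1)
  calc 1 / (N * 2 ^ k) * r ^ 2 * g r
      = r * (g r * (r ^ (k + 1) / (k + 1)) / (2 * r) ^ k) := by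
        rw [hk, mul_pow]; field_simp; ring
    _ ≤ r * ((∫ t in (0 : ℝ)..r, t ^ k * g t) / (2 * r) ^ k) := by gcongr
    _ ≤ w r - w (2 * r) := hdecay
    _ ≤ w r := by linarith [hwpos (2 * r) (by linarith)]

theorem stmt18 (N : ℕ) (hN : 3 ≤ N) (p : ℝ) (hp : 0 < p) (u w : ℝ → ℝ)
    (hu : ContDiff ℝ 2 u) (hw : ContDiff ℝ 2 w)
    (hupos : ∀ r ≥ (0 : ℝ), 0 < u r) (hwpos : ∀ r ≥ (0 : ℝ), 0 < w r)
    (hu0 : deriv u 0 = 0) (hw0 : deriv w 0 = 0)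
    (hwmono : AntitoneOn w (Set.Ici 0)) (humono : MonotoneOn u (Set.Ici 0))
    (hequ : ∀ r > (0 : ℝ),
      deriv (deriv u) r + ((N : ℝ) - 1) * deriv u r / r = w r)
    (heqw : ∀ r > (0 : ℝ),
      deriv (deriv w) r + ((N : ℝ) - 1) * deriv w r / r = -(u r) ^ (-p)) :
    ∃ C > (0 : ℝ), ∀ r > (0 : ℝ), C * r ^ 2 * (u r) ^ (-p) ≤ w r :=
  stmt18_general N hN p hp u w hu hw hupos hwpos humono heqw
end
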